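/- arXiv:1305.1983 — 2 statements merged into one kernel-verified Lean document; each statement's English description precedes it below -/
import Mathlib

section
/- Let Ω ⊆ ℂ² be an open set, f : ℂ² → ℂ holomorphic and bounded by M on Ω. Let Γ, γ : [0,1) → ℂ² be curves, and R : [0,1) → ℝ a function with R(t) > 1, such that for every t ∈ [0,1) and every λ ∈ ℂ with |λ| < R(t), the point (1-λ)·γ(t) + λ·Γ(t) lies in Ω. If R(t) → ∞ as t → 1⁻, then f(Γ(t)) - f(γ(t)) → 0 as t → 1⁻. -/
theorem slice_difference_tendsto_zero
    (Ω : Set (EuclideanSpace ℂ (Fin 2))) (hΩ : IsOpen Ω)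
    (f : EuclideanSpace ℂ (Fin 2) → ℂ) (M : ℝ)
    (hf : DifferentiableOn ℂ f Ω) (hM : ∀ z ∈ Ω, ‖f z‖ ≤ M)
    (Γ γ : ℝ → EuclideanSpace ℂ (Fin 2)) (R : ℝ → ℝ)
    (hR : ∀ t ∈ Set.Ico (0:ℝ) 1, 1 < R t)
    (hmem : ∀ t ∈ Set.Ico (0:ℝ) 1, ∀ lam : ℂ, ‖lam‖ < R t →
      (1 - lam) • γ t + lam • Γ t ∈ Ω)
    (hRtop : Filter.Tendsto R (nhdsWithin 1 (Set.Ico (0:ℝ) 1)) Filter.atTop) :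
    Filter.Tendsto (fun t => f (Γ t) - f (γ t))
      (nhdsWithin 1 (Set.Ico (0:ℝ) 1)) (nhds 0) := by
  have key : ∀ t ∈ Set.Ico (0:ℝ) 1, ‖f (Γ t) - f (γ t)‖ ≤ (2 * M + 1) / R t := by
    intro t ht
    set g : ℂ → ℂ := fun lam => f ((1 - lam) • γ t + lam • Γ t) with hg
    have hγΩ : γ t ∈ Ω := by
      have := hmem t ht 0 (by simpa using (hR t ht).trans_le' zero_le_one)
      simpa using this
    have hg0 : g 0 = f (γ t) := by simp [hg]
    have hg1 : g 1 = f (Γ t) := by simp [hg]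
    have hdiff : DifferentiableOn ℂ g (Metric.ball (0:ℂ) (R t)) := by
      intro lam hlam
      have hmemΩ : (1 - lam) • γ t + lam • Γ t ∈ Ω := by
        apply hmem t ht lam
        simpa [Metric.mem_ball, dist_zero_right] using hlam
      have hinner : Differentiable ℂ (fun lam : ℂ => (1 - lam) • γ t + lam • Γ t) :=
        (((differentiable_const (1:ℂ)).sub differentiable_id).smul_const (γ t)).add
          (differentiable_id.smul_const (Γ t))
      exact ((hf.differentiableAt (hΩ.mem_nhds hmemΩ)).comp lam
        (hinner lam)).differentiableWithinAt
    have hmaps : Set.MapsTo g (Metric.ball (0:ℂ) (R t)) (Metric.ball (g 0) (2 * M + 1)) := by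
      intro lam hlam
      have hmemΩ : (1 - lam) • γ t + lam • Γ t ∈ Ω := by
        apply hmem t ht lam
        simpa [Metric.mem_ball, dist_zero_right] using hlam
      have h1 : ‖f ((1 - lam) • γ t + lam • Γ t)‖ ≤ M := hM _ hmemΩ
      have h2 : ‖f (γ t)‖ ≤ M := hM _ hγΩ
      rw [Metric.mem_ball, dist_eq_norm, hg0, hg]
      calc ‖f ((1 - lam) • γ t + lam • Γ t) - f (γ t)‖
          ≤ ‖f ((1 - lam) • γ t + lam • Γ t)‖ + ‖f (γ t)‖ := norm_sub_le _ _
        _ ≤ M + M := add_le_add h1 h2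
        _ < 2 * M + 1 := by linarith
    have h1mem : (1:ℂ) ∈ Metric.ball (0:ℂ) (R t) := by
      simpa [Metric.mem_ball, dist_zero_right] using hR t ht
    have := Complex.dist_le_div_mul_dist_of_mapsTo_ball hdiff (hmaps.mono_right Metric.ball_subset_closedBall) h1mem
    rw [hg0, hg1] at this
    simpa [dist_eq_norm] using this
  have hlim : Filter.Tendsto (fun t => (2 * M + 1) / R t)
      (nhdsWithin 1 (Set.Ico (0:ℝ) 1)) (nhds 0) :=
    Filter.Tendsto.div_atTop tendsto_const_nhds hRtop
  exact squeeze_zero_norm' (Filter.eventually_of_mem self_mem_nhdsWithin key) hlim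
end

section
/- Let Ω ⊆ ℂ² be open, ζ ∈ ∂Ω, ν ∈ ℂ² a unit vector, and m ≥ 1. Suppose Γ : [0,1) → Ω is a curve with Γ(t) → ζ, and let γ(t) = ⟨Γ(t), ν⟩·ν be its orthogonal projection onto ℂν. Suppose there exists k > 0 such that for all t and all λ ∈ ℂ with |λ|^m·|Γ(t) - γ(t)|^m < k·|ζ - γ(t)|, the point γ(t) + λ·(Γ(t) - γ(t)) lies in Ω. If Γ is special, i.e. |Γ(t) - γ(t)|^m = o(|ζ - γ(t)|) as t → 1⁻ (and γ(t) ≠ ζ, Γ(t) ≠ γ(t) for all t), then for every bounded holomorphic function f on Ω, f(Γ(t)) - f(γ(t)) → 0 as t → 1⁻. -/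
theorem special_curve_comparison
    (Ω : Set (EuclideanSpace ℂ (Fin 2))) (hΩ : IsOpen Ω)
    (ζ ν : EuclideanSpace ℂ (Fin 2)) (hζ : ζ ∈ frontier Ω) (hν : ‖ν‖ = 1)
    (m : ℕ) (hm : 1 ≤ m)
    (Γ : ℝ → EuclideanSpace ℂ (Fin 2))
    (hΓΩ : ∀ t ∈ Set.Ico (0:ℝ) 1, Γ t ∈ Ω)
    (hΓζ : Filter.Tendsto Γ (nhdsWithin 1 (Set.Ico (0:ℝ) 1)) (nhds ζ))
    (γ : ℝ → EuclideanSpace ℂ (Fin 2))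
    (hγ : ∀ t, γ t = (inner ℂ ν (Γ t) : ℂ) • ν)
    (hk : ∃ k : ℝ, 0 < k ∧ ∀ t ∈ Set.Ico (0:ℝ) 1, ∀ lam : ℂ,
      ‖lam‖ ^ m * ‖Γ t - γ t‖ ^ m < k * ‖ζ - γ t‖ →
      γ t + lam • (Γ t - γ t) ∈ Ω)
    (hne₁ : ∀ t ∈ Set.Ico (0:ℝ) 1, γ t ≠ ζ)
    (hne₂ : ∀ t ∈ Set.Ico (0:ℝ) 1, Γ t ≠ γ t)
    (hspecial : Filter.Tendsto (fun t => ‖Γ t - γ t‖ ^ m / ‖ζ - γ t‖)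
      (nhdsWithin 1 (Set.Ico (0:ℝ) 1)) (nhds 0)) :
    ∀ f : EuclideanSpace ℂ (Fin 2) → ℂ, DifferentiableOn ℂ f Ω →
      (∃ M : ℝ, ∀ z ∈ Ω, ‖f z‖ ≤ M) →
      Filter.Tendsto (fun t => f (Γ t) - f (γ t))
        (nhdsWithin 1 (Set.Ico (0:ℝ) 1)) (nhds 0) := by
  rintro f hf ⟨M, hM⟩
  obtain ⟨k, hk0, hkΩ⟩ := hk
  have hm0 : (m : ℝ) ≠ 0 := by positivity
  have hM0 : 0 ≤ M :=
    le_trans (norm_nonneg _) (hM _ (hΓΩ 0 ⟨le_refl 0, one_pos⟩))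
  set u : ℝ → ℝ := fun t => ‖Γ t - γ t‖ ^ m / ‖ζ - γ t‖ with hu
  have key : ∀ t ∈ Set.Ico (0:ℝ) 1, u t < k →
      ‖f (Γ t) - f (γ t)‖ ≤ (2*M+2) * (u t / k) ^ ((1:ℝ)/m) := by
    intro t ht htk
    have hv : 0 < ‖Γ t - γ t‖ := by
      simpa [sub_eq_zero] using hne₂ t ht
    have hw : 0 < ‖ζ - γ t‖ := by
      rw [norm_pos_iff, sub_ne_zero]
      exact fun h => hne₁ t ht h.symm
    have hupos : 0 < u t := by positivity
    set R : ℝ := (k / u t) ^ ((1:ℝ)/m) with hR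
    have hRpos : 0 < R := Real.rpow_pos_of_pos (by positivity) _
    have hRm : R ^ m = k / u t := by
      rw [hR, ← Real.rpow_natCast (_ ^ _) m, ← Real.rpow_mul (by positivity),
        one_div, inv_mul_cancel₀ hm0, Real.rpow_one]
    have hball : ∀ lam : ℂ, lam ∈ Metric.ball (0:ℂ) R →
        γ t + lam • (Γ t - γ t) ∈ Ω := by
      intro lam hlam
      apply hkΩ t ht
      have h1 : ‖lam‖ ^ m < R ^ m := by
        apply pow_lt_pow_left₀ _ (norm_nonneg _) (by omega)
        simpa using hlam
      rw [hRm] at h1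
      have h2 : ‖lam‖ ^ m * ‖Γ t - γ t‖ ^ m < (k / u t) * ‖Γ t - γ t‖ ^ m :=
        mul_lt_mul_of_pos_right h1 (by positivity)
      calc ‖lam‖ ^ m * ‖Γ t - γ t‖ ^ m < (k / u t) * ‖Γ t - γ t‖ ^ m := h2
        _ = k * ‖ζ - γ t‖ := by
            rw [hu]
            field_simp
    set g : ℂ → ℂ := fun lam => f (γ t + lam • (Γ t - γ t)) with hg
    have hg0 : g 0 = f (γ t) := by simp [hg]
    have hg1 : g 1 = f (Γ t) := by simp [hg]
    have hgd : DifferentiableOn ℂ g (Metric.ball (0:ℂ) R) := by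
      apply hf.comp
      · exact (Differentiable.differentiableOn (by fun_prop))
      · intro lam hlam
        exact hball lam hlam
    have hmaps : Set.MapsTo g (Metric.ball (0:ℂ) R) (Metric.ball (g 0) (2*M+2)) := by
      intro lam hlam
      have h1 : ‖g lam‖ ≤ M := hM _ (hball lam hlam)
      have h2 : ‖g 0‖ ≤ M := by
        rw [hg0]
        have := hball 0 (by simpa using hRpos)
        simp only [zero_smul, add_zero] at this
        exact hM _ this
      rw [Metric.mem_ball, dist_eq_norm]
      calc ‖g lam - g 0‖ ≤ ‖g lam‖ + ‖g 0‖ := norm_sub_le _ _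
        _ ≤ M + M := add_le_add h1 h2
        _ < 2*M+2 := by linarith
    have h1R : (1:ℂ) ∈ Metric.ball (0:ℂ) R := by
      simp only [Metric.mem_ball, dist_zero_right, norm_one]
      rw [hR]
      exact (Real.one_lt_rpow_iff_of_pos (by positivity)).mpr
        (Or.inl ⟨by rw [lt_div_iff₀ hupos, one_mul]; exact htk, by positivity⟩)
    have := Complex.dist_le_div_mul_dist_of_mapsTo_ball hgd (hmaps.mono_right Metric.ball_subset_closedBall) h1R
    rw [dist_eq_norm, dist_eq_norm, hg0, hg1] at this
    simp only [sub_zero, norm_one, mul_one] at this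
    calc ‖f (Γ t) - f (γ t)‖ ≤ (2*M+2) / R := this
      _ = (2*M+2) * (u t / k) ^ ((1:ℝ)/m) := by
          rw [div_eq_mul_inv, hR, ← Real.inv_rpow (by positivity)]
          congr 2
          rw [inv_div]
  have hlim : Filter.Tendsto (fun t => (2*M+2) * (u t / k) ^ ((1:ℝ)/m))
      (nhdsWithin 1 (Set.Ico (0:ℝ) 1)) (nhds 0) := by
    have h1 : Filter.Tendsto (fun t => u t / k)
        (nhdsWithin 1 (Set.Ico (0:ℝ) 1)) (nhds 0) := by
      simpa using hspecial.div_const k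
    have h2 : Filter.Tendsto (fun t => (u t / k) ^ ((1:ℝ)/m))
        (nhdsWithin 1 (Set.Ico (0:ℝ) 1)) (nhds 0) := by
      have hc : ContinuousAt (fun x : ℝ => x ^ ((1:ℝ)/m)) 0 :=
        Real.continuousAt_rpow_const 0 _ (Or.inr (by positivity))
      have := hc.tendsto.comp h1
      have hz : (0:ℝ) ^ ((m:ℝ))⁻¹ = 0 := Real.zero_rpow (inv_ne_zero hm0)
      simpa [Function.comp_def, hz] using this
    simpa using h2.const_mul (2*M+2)
  apply squeeze_zero_norm' _ hlim
  filter_upwards [self_mem_nhdsWithin, hspecial.eventually (gt_mem_nhds hk0)] with t ht htk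
  exact key t ht htk
end
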